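/- arXiv:2112.14577 — 4 statements merged into one kernel-verified Lean document; each statement's English description precedes it below -/
import Mathlib

section
/- For an n×n complex matrix A, the following are equivalent: (1) the characteristic polynomial of A equals its minimal polynomial; (2) the centralizer of A in M(n,ℂ) has dimension n; (3) the centralizer of A in M(n,ℂ) equals ℂ[A], the algebra of polynomials in A. -/
open Matrix Polynomial Module DirectSum

noncomputable section RegularAux

namespace RegularAux

/-- `finrank` over `ℂ` of `ℂ[X] ⧸ (q)` is `natDegree q`. -/
lemma finrank_quot (q : ℂ[X]) (hq : q ≠ 0) :
    Module.finrank ℂ (ℂ[X] ⧸ (Submodule.span ℂ[X] {q})) = q.natDegree := by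
  show Module.finrank ℂ (AdjoinRoot q) = q.natDegree
  rw [(AdjoinRoot.powerBasis hq).finrank, AdjoinRoot.powerBasis_dim]

theorem finite_quot (q : ℂ[X]) (hq : q ≠ 0) :
    Module.Finite ℂ (ℂ[X] ⧸ (Submodule.span ℂ[X] {q})) := by
  exact Module.Finite.of_basis (AdjoinRoot.powerBasis hq).basis

section HomLemmas

variable (N : Type) [AddCommGroup N] [Module ℂ[X] N] [Module ℂ N] [IsScalarTower ℂ ℂ[X] N]

/-- Hom out of a cyclic module is torsion. -/
def homQuotEquiv (a : ℂ[X]) :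
    ((ℂ[X] ⧸ (Submodule.span ℂ[X] {a})) →ₗ[ℂ[X]] N) ≃ₗ[ℂ]
      Submodule.torsionBy ℂ[X] N a where
  toFun φ := ⟨φ (Submodule.Quotient.mk 1), by
    rw [Submodule.mem_torsionBy_iff, ← _root_.map_smul]
    rw [show (a • (Submodule.Quotient.mk 1 : ℂ[X] ⧸ (Submodule.span ℂ[X] {a}))) = Submodule.Quotient.mk a by
      rw [← Submodule.Quotient.mk_smul]; norm_num,
      (Submodule.Quotient.mk_eq_zero _).2 (Submodule.mem_span_singleton_self a), map_zero]⟩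
  invFun y := Submodule.liftQ _ (LinearMap.toSpanSingleton ℂ[X] N y)
    (by rw [Submodule.span_le]; intro x hx; simp only [Set.mem_singleton_iff] at hx; subst hx
        simp [LinearMap.mem_ker, LinearMap.toSpanSingleton_apply,
          (Submodule.mem_torsionBy_iff _ _).1 y.2])
  map_add' _ _ := rfl
  map_smul' _ _ := rfl
  left_inv φ := by
    apply Submodule.linearMap_qext; ext
    simp only [LinearMap.comp_apply, Submodule.mkQ_apply, Submodule.liftQ_apply,
      LinearMap.toSpanSingleton_apply, ← _root_.map_smul]
    congr 1
    rw [← Submodule.Quotient.mk_smul]; norm_num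
  right_inv y := by
    ext
    simp only [Submodule.liftQ_apply, LinearMap.toSpanSingleton_apply, one_smul]

variable {ι : Type} [Fintype ι] [DecidableEq ι] (Q : ι → Type) [∀ i, AddCommGroup (Q i)]
  [∀ i, Module ℂ[X] (Q i)] [∀ i, Module ℂ (Q i)] [∀ i, IsScalarTower ℂ ℂ[X] (Q i)]
  (M : Type) [AddCommGroup M] [Module ℂ[X] M] [Module ℂ M] [IsScalarTower ℂ ℂ[X] M]

/-- Hom into a finite product decomposes. -/
def homPi : (M →ₗ[ℂ[X]] (∀ i, Q i)) ≃ₗ[ℂ] (∀ i, M →ₗ[ℂ[X]] Q i) where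
  toFun g i := (LinearMap.proj i) ∘ₗ g
  invFun g := LinearMap.pi g
  map_add' _ _ := rfl
  map_smul' _ _ := rfl
  left_inv g := by ext x i; rfl
  right_inv g := by ext i x; rfl

/-- Endomorphisms of a finite direct sum decompose as a product of Hom spaces. -/
def endDirectSumEquiv :
    ((⨁ i, Q i) →ₗ[ℂ[X]] (⨁ i, Q i)) ≃ₗ[ℂ] (∀ i, ∀ j, Q i →ₗ[ℂ[X]] Q j) :=
  ((DFinsupp.lsum ℂ).symm.trans
    (LinearEquiv.piCongrRight fun i =>
      (((LinearEquiv.refl ℂ[X] (Q i)).arrowCongr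
        (DirectSum.linearEquivFunOnFintype ℂ[X] ι Q)).restrictScalars ℂ).trans
        (homPi Q (Q i))))

end HomLemmas

section Main

variable (n : ℕ) (A : Matrix (Fin n) (Fin n) ℂ)

/-- The centralizer of a matrix is isomorphic to the `ℂ[X]`-endomorphisms of the
induced `ℂ[X]`-module structure on `ℂⁿ`. -/
def centEquivEnd : (Subalgebra.centralizer ℂ {A} : Subalgebra ℂ (Matrix (Fin n) (Fin n) ℂ)) ≃ₗ[ℂ]
    (AEval' A.mulVecLin →ₗ[ℂ[X]] AEval' A.mulVecLin) where
  toFun B := LinearMap.ofAEval A.mulVecLin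
      ((AEval'.of A.mulVecLin).toLinearMap ∘ₗ (B : Matrix (Fin n) (Fin n) ℂ).mulVecLin)
      (fun m => by
        have hc : A * B.1 = B.1 * A := (Subalgebra.mem_centralizer_iff ℂ).1 B.2 A rfl
        simp only [LinearMap.comp_apply, LinearEquiv.coe_toLinearMap, AEval'.X_smul_of]
        show (AEval'.of A.mulVecLin) ((B.1).mulVecLin (A.mulVecLin m)) = _
        congr 1
        calc (B.1).mulVecLin (A.mulVecLin m) = (B.1 * A).mulVecLin m := by
              rw [Matrix.mulVecLin_mul]; rfl
          _ = A.mulVecLin ((B.1).mulVecLin m) := by rw [← hc, Matrix.mulVecLin_mul]; rfl)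
  invFun g := ⟨LinearMap.toMatrix'
      ((AEval'.of A.mulVecLin).symm.toLinearMap ∘ₗ (g.restrictScalars ℂ) ∘ₗ
        (AEval'.of A.mulVecLin).toLinearMap), by
      rw [Subalgebra.mem_centralizer_iff]
      intro x hx
      have hx' : x = A := hx
      subst hx'
      apply Matrix.toLin'.injective
      rw [Matrix.toLin'_mul, Matrix.toLin'_mul, Matrix.toLin'_toMatrix']
      refine LinearMap.ext fun m => ?_
      simp only [LinearMap.comp_apply]
      show x.mulVecLin ((AEval'.of x.mulVecLin).symm (g ((AEval'.of x.mulVecLin) m)))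
        = (AEval'.of x.mulVecLin).symm (g ((AEval'.of x.mulVecLin) (x.mulVecLin m)))
      rw [← AEval'.of_symm_X_smul, ← _root_.map_smul, AEval'.X_smul_of]⟩
  map_add' B C := by
    ext m
    show (AEval'.of A.mulVecLin) (((B.1 + C.1)).mulVecLin ((AEval'.of A.mulVecLin).symm m)) = _
    rw [Matrix.mulVecLin_add]
    rfl
  map_smul' c B := by
    ext m
    show (AEval'.of A.mulVecLin) ((c • B.1).mulVecLin ((AEval'.of A.mulVecLin).symm m)) = _
    rw [show (c • B.1).mulVecLin = c • (B.1).mulVecLin from by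
      ext v; simp [Matrix.mulVecLin_apply, Matrix.smul_mulVec]]
    rfl
  left_inv B := by
    ext1
    show LinearMap.toMatrix' _ = B.1
    apply Matrix.toLin'.injective
    rw [Matrix.toLin'_toMatrix']
    refine LinearMap.ext fun m => ?_
    rfl
  right_inv g := by
    ext m
    show (AEval'.of A.mulVecLin) ((Matrix.toLin' (LinearMap.toMatrix' _)) _) = _
    rw [Matrix.toLin'_toMatrix']
    simp

end Main

end RegularAux

end RegularAux

open Matrix Polynomial Module DirectSum RegularAux

set_option maxHeartbeats 2000000 in
set_option synthInstance.maxHeartbeats 400000 in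
/-- For an `n × n` complex matrix `A`, the following are equivalent:
(1) the characteristic polynomial of `A` equals its minimal polynomial;
(2) the centralizer of `A` in `M(n,ℂ)` has dimension `n`;
(3) the centralizer of `A` in `M(n,ℂ)` equals `ℂ[A]`, the algebra of polynomials in `A`. -/
theorem regular_matrix_tfae (n : ℕ) (A : Matrix (Fin n) (Fin n) ℂ) :
    [A.charpoly = minpoly ℂ A,
     Module.finrank ℂ (Subalgebra.centralizer ℂ {A} : Subalgebra ℂ (Matrix (Fin n) (Fin n) ℂ)) = n,
     (Subalgebra.centralizer ℂ {A} : Subalgebra ℂ (Matrix (Fin n) (Fin n) ℂ)) =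
       Algebra.adjoin ℂ {A}].TFAE := by
  classical
  have hAint : IsIntegral ℂ A := Matrix.isIntegral A
  have hμmonic : (minpoly ℂ A).Monic := minpoly.monic hAint
  have hμ0 : minpoly ℂ A ≠ 0 := hμmonic.ne_zero
  -- aeval through mulVecLin
  have haev : ∀ pp : ℂ[X], aeval (A.mulVecLin) pp = (aeval A pp).mulVecLin := by
    intro pp
    show aeval ((Matrix.toLinAlgEquiv' : Matrix (Fin n) (Fin n) ℂ ≃ₐ[ℂ] _).toAlgHom A) pp
      = (Matrix.toLinAlgEquiv' : Matrix (Fin n) (Fin n) ℂ ≃ₐ[ℂ] _).toAlgHom (aeval A pp)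
    rw [Polynomial.aeval_algHom_apply]
  -- divisibility by the minimal polynomial detects killing the module
  have hkills : ∀ pp : ℂ[X], (minpoly ℂ A ∣ pp) ↔ ∀ x : AEval' A.mulVecLin, pp • x = 0 := by
    intro pp
    have h1 : (∀ x : AEval' A.mulVecLin, pp • x = 0) ↔ aeval A pp = 0 := by
      constructor
      · intro h
        have h2 : (aeval A pp).mulVecLin = 0 := by
          rw [← haev]
          exact LinearMap.ext fun x => h ((AEval'.of A.mulVecLin) x)
        apply Matrix.toLin'.injective
        rw [_root_.map_zero]
        exact h2
      · intro h x
        show (aeval A.mulVecLin pp) ((AEval'.of A.mulVecLin).symm x) = 0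
        rw [haev, h, Matrix.mulVecLin_zero]
        rfl
    rw [h1]
    constructor
    · rintro ⟨c, rfl⟩
      rw [_root_.map_mul, minpoly.aeval, zero_mul]
    · exact minpoly.dvd ℂ A
  have htors : Module.IsTorsion ℂ[X] (AEval' A.mulVecLin) := fun x =>
    ⟨⟨minpoly ℂ A, mem_nonZeroDivisors_of_ne_zero hμ0⟩, (hkills _).1 dvd_rfl x⟩
  obtain ⟨ι, hι, prm, hprm, e, ⟨e2⟩⟩ :=
    Module.equiv_directSum_of_isTorsion (R := ℂ[X]) (M := AEval' A.mulVecLin) htors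
  haveI := hι
  set q : ι → ℂ[X] := fun i => prm i ^ e i with hqdef
  have hq0 : ∀ i, q i ≠ 0 := fun i => pow_ne_zero _ (hprm i).ne_zero
  haveI hQfin : ∀ i, Module.Finite ℂ (ℂ[X] ⧸ (ℂ[X] ∙ q i)) := fun i =>
    finite_quot (q i) (hq0 i)
  have hQdeg : ∀ i, Module.finrank ℂ (ℂ[X] ⧸ (ℂ[X] ∙ q i)) = (q i).natDegree := fun i =>
    finrank_quot (q i) (hq0 i)
  -- the dimension count for `n`
  have hn : n = ∑ i, (q i).natDegree := by
    have h1 : Module.finrank ℂ (AEval' A.mulVecLin) = n := by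
      rw [← (AEval'.of A.mulVecLin).finrank_eq]
      exact Module.finrank_fin_fun ℂ
    have h2 : Module.finrank ℂ (AEval' A.mulVecLin)
        = Module.finrank ℂ (⨁ i, ℂ[X] ⧸ (ℂ[X] ∙ q i)) := (e2.restrictScalars ℂ).finrank_eq
    have h3 : Module.finrank ℂ (⨁ i, ℂ[X] ⧸ (ℂ[X] ∙ q i))
        = Module.finrank ℂ (∀ i, ℂ[X] ⧸ (ℂ[X] ∙ q i)) :=
      ((DirectSum.linearEquivFunOnFintype ℂ[X] ι _).restrictScalars ℂ).finrank_eq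
    rw [← h1, h2, h3, Module.finrank_pi_fintype]
    exact Finset.sum_congr rfl fun i _ => hQdeg i
  -- Hom space dimensions
  set t : ι → ι → ℕ := fun i j =>
    Module.finrank ℂ ((ℂ[X] ⧸ (ℂ[X] ∙ q i)) →ₗ[ℂ[X]] (ℂ[X] ⧸ (ℂ[X] ∙ q j))) with htdef
  haveI htfin : ∀ i j, Module.Finite ℂ
      ((ℂ[X] ⧸ (ℂ[X] ∙ q i)) →ₗ[ℂ[X]] (ℂ[X] ⧸ (ℂ[X] ∙ q j))) := by
    intro i j
    haveI : Module.Finite ℂ (Submodule.torsionBy ℂ[X] (ℂ[X] ⧸ (ℂ[X] ∙ q j)) (q i)) :=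
      FiniteDimensional.of_injective
        ((Submodule.torsionBy ℂ[X] (ℂ[X] ⧸ (ℂ[X] ∙ q j)) (q i)).subtype.restrictScalars ℂ)
        (Submodule.injective_subtype _)
    exact Module.Finite.equiv (homQuotEquiv _ (q i)).symm
  have htor_eq : ∀ i j, t i j
      = Module.finrank ℂ (Submodule.torsionBy ℂ[X] (ℂ[X] ⧸ (ℂ[X] ∙ q j)) (q i)) := fun i j =>
    (homQuotEquiv _ (q i)).finrank_eq
  -- each quotient is killed by its own polynomial
  have hkillsQ : ∀ j (y : ℂ[X] ⧸ (ℂ[X] ∙ q j)), q j • y = 0 := by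
    intro j y
    obtain ⟨r, rfl⟩ := Submodule.Quotient.mk_surjective _ y
    rw [← Submodule.Quotient.mk_smul, Submodule.Quotient.mk_eq_zero]
    exact Submodule.mem_span_singleton.2 ⟨r, by rw [smul_eq_mul, smul_eq_mul, mul_comm]⟩
  -- diagonal dimensions
  have htii : ∀ i, t i i = (q i).natDegree := by
    intro i
    rw [htor_eq]
    have htop : Submodule.torsionBy ℂ[X] (ℂ[X] ⧸ (ℂ[X] ∙ q i)) (q i) = ⊤ := by
      rw [eq_top_iff]
      exact fun y _ => (Submodule.mem_torsionBy_iff _ _).2 (hkillsQ i y)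
    rw [htop, ((Submodule.topEquiv (R := ℂ[X])
      (M := ℂ[X] ⧸ (ℂ[X] ∙ q i))).restrictScalars ℂ).finrank_eq]
    exact hQdeg i
  -- coprime off-diagonal terms vanish
  have hcop0 : ∀ i j, IsCoprime (q i) (q j) → t i j = 0 := by
    intro i j hc
    rw [htor_eq]
    have hbot : Submodule.torsionBy ℂ[X] (ℂ[X] ⧸ (ℂ[X] ∙ q j)) (q i) = ⊥ := by
      rw [Submodule.eq_bot_iff]
      intro y hy
      have hyi : q i • y = 0 := (Submodule.mem_torsionBy_iff _ _).1 hy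
      obtain ⟨u, v, huv⟩ := hc
      calc y = (1 : ℂ[X]) • y := (one_smul _ _).symm
        _ = (u * q i + v * q j) • y := by rw [huv]
        _ = u • (q i • y) + v • (q j • y) := by rw [add_smul, mul_smul, mul_smul]
        _ = 0 := by rw [hyi, hkillsQ j y, smul_zero, smul_zero, add_zero]
    rw [hbot]
    exact Module.finrank_zero_of_subsingleton
  -- non-coprime off-diagonal terms are positive
  have hncop : ∀ i j, ¬ IsCoprime (q i) (q j) → 1 ≤ t i j := by
    intro i j hc
    rw [htor_eq]
    set d := EuclideanDomain.gcd (q i) (q j) with hd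
    have hdu : ¬ IsUnit d := fun h => hc (EuclideanDomain.gcd_isUnit_iff.1 h)
    obtain ⟨b', hb'⟩ : d ∣ q j := EuclideanDomain.gcd_dvd_right _ _
    obtain ⟨a', ha'⟩ : d ∣ q i := EuclideanDomain.gcd_dvd_left _ _
    set y : ℂ[X] ⧸ (ℂ[X] ∙ q j) := Submodule.Quotient.mk b' with hy
    have hymem : y ∈ Submodule.torsionBy ℂ[X] (ℂ[X] ⧸ (ℂ[X] ∙ q j)) (q i) := by
      rw [Submodule.mem_torsionBy_iff, hy, ← Submodule.Quotient.mk_smul,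
        Submodule.Quotient.mk_eq_zero]
      exact Submodule.mem_span_singleton.2 ⟨a', by
        rw [smul_eq_mul, smul_eq_mul, hb', ha']; ring⟩
    have hyne : y ≠ 0 := by
      rw [hy, Ne, Submodule.Quotient.mk_eq_zero]
      intro hmem
      obtain ⟨c, hcq⟩ := Submodule.mem_span_singleton.1 hmem
      rw [smul_eq_mul] at hcq
      have : q j * 1 = q j * (d * c) := by
        rw [mul_one]
        calc q j = d * b' := hb'
          _ = d * (c * q j) := by rw [hcq]
          _ = q j * (d * c) := by ring
      have h1 : (1 : ℂ[X]) = d * c := mul_left_cancel₀ (hq0 j) this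
      exact hdu (IsUnit.of_mul_eq_one (a := d) c h1.symm)
    haveI : Nontrivial (Submodule.torsionBy ℂ[X] (ℂ[X] ⧸ (ℂ[X] ∙ q j)) (q i)) :=
      ⟨⟨⟨y, hymem⟩, 0, fun h => hyne (by simpa using congrArg Subtype.val h)⟩⟩
    haveI : Module.Finite ℂ (Submodule.torsionBy ℂ[X] (ℂ[X] ⧸ (ℂ[X] ∙ q j)) (q i)) :=
      FiniteDimensional.of_injective
        ((Submodule.torsionBy ℂ[X] (ℂ[X] ⧸ (ℂ[X] ∙ q j)) (q i)).subtype.restrictScalars ℂ)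
        (Submodule.injective_subtype _)
    exact Module.finrank_pos_iff.2 inferInstance
  -- the centralizer dimension
  have hcent : Module.finrank ℂ
      (Subalgebra.centralizer ℂ {A} : Subalgebra ℂ (Matrix (Fin n) (Fin n) ℂ))
      = ∑ i, ∑ j, t i j := by
    have c1 : Module.finrank ℂ
        (Subalgebra.centralizer ℂ {A} : Subalgebra ℂ (Matrix (Fin n) (Fin n) ℂ))
        = Module.finrank ℂ (AEval' A.mulVecLin →ₗ[ℂ[X]] AEval' A.mulVecLin) :=
      LinearEquiv.finrank_eq (centEquivEnd n A)
    have c2 : Module.finrank ℂ (AEval' A.mulVecLin →ₗ[ℂ[X]] AEval' A.mulVecLin)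
        = Module.finrank ℂ ((⨁ i, ℂ[X] ⧸ (ℂ[X] ∙ q i)) →ₗ[ℂ[X]] (⨁ i, ℂ[X] ⧸ (ℂ[X] ∙ q i))) :=
      LinearEquiv.finrank_eq ((e2.arrowCongr e2).restrictScalars ℂ)
    have c3 : Module.finrank ℂ
        ((⨁ i, ℂ[X] ⧸ (ℂ[X] ∙ q i)) →ₗ[ℂ[X]] (⨁ i, ℂ[X] ⧸ (ℂ[X] ∙ q i)))
        = Module.finrank ℂ (∀ i, ∀ j, (ℂ[X] ⧸ (ℂ[X] ∙ q i)) →ₗ[ℂ[X]] (ℂ[X] ⧸ (ℂ[X] ∙ q j))) :=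
      LinearEquiv.finrank_eq (endDirectSumEquiv _)
    haveI : ∀ i j, Module.Free ℂ ((ℂ[X] ⧸ (ℂ[X] ∙ q i)) →ₗ[ℂ[X]] (ℂ[X] ⧸ (ℂ[X] ∙ q j))) :=
      fun i j => Module.Free.of_divisionRing ℂ _
    haveI : ∀ i, Module.Free ℂ (∀ j, (ℂ[X] ⧸ (ℂ[X] ∙ q i)) →ₗ[ℂ[X]] (ℂ[X] ⧸ (ℂ[X] ∙ q j))) :=
      fun i => Module.Free.pi ℂ _
    rw [c1, c2, c3, Module.finrank_pi_fintype]
    exact Finset.sum_congr rfl fun i _ => Module.finrank_pi_fintype ℂ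
  -- `μ ∣ p` iff each `q i ∣ p`
  have hkills2 : ∀ pp : ℂ[X], (minpoly ℂ A ∣ pp) ↔ ∀ i, q i ∣ pp := by
    intro pp
    rw [hkills pp]
    constructor
    · intro h i
      have h1 : pp • ((DirectSum.lof ℂ[X] ι (fun i => ℂ[X] ⧸ (ℂ[X] ∙ q i)) i)
          (Submodule.Quotient.mk 1)) = 0 := by
        have h2 := h (e2.symm ((DirectSum.lof ℂ[X] ι (fun i => ℂ[X] ⧸ (ℂ[X] ∙ q i)) i)
          (Submodule.Quotient.mk 1)))
        have h3 := congrArg e2 h2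
        rw [_root_.map_smul, e2.apply_symm_apply, _root_.map_zero] at h3
        exact h3
      have h4 := congrArg (DirectSum.component ℂ[X] ι (fun i => ℂ[X] ⧸ (ℂ[X] ∙ q i)) i) h1
      rw [_root_.map_smul, _root_.map_zero, DirectSum.component.lof_self] at h4
      have h5 : (Submodule.Quotient.mk pp : ℂ[X] ⧸ (ℂ[X] ∙ q i)) = 0 := by
        rw [← h4, ← Submodule.Quotient.mk_smul]
        congr 1
        rw [smul_eq_mul, mul_one]
      rw [Submodule.Quotient.mk_eq_zero] at h5
      obtain ⟨c, hcq⟩ := Submodule.mem_span_singleton.1 h5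
      exact ⟨c, by rw [← hcq, smul_eq_mul, mul_comm]⟩
    · intro h x
      have hz : ∀ i (z : ℂ[X] ⧸ (ℂ[X] ∙ q i)), pp • z = 0 := by
        intro i z
        obtain ⟨c, hcq⟩ := h i
        rw [hcq, mul_comm, mul_smul, hkillsQ i z, smul_zero]
      have h1 : ∀ y : (⨁ i, ℂ[X] ⧸ (ℂ[X] ∙ q i)), pp • y = 0 := by
        intro y
        refine DirectSum.induction_on y (smul_zero _) (fun i z => ?_) ?_
        · rw [← DirectSum.lof_eq_of ℂ[X], ← _root_.map_smul, hz i z, _root_.map_zero]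
        · intro a b ha hb
          rw [smul_add, ha, hb, add_zero]
      have h2 := congrArg e2.symm (h1 (e2 x))
      rw [_root_.map_smul, e2.symm_apply_apply, _root_.map_zero] at h2
      exact h2
  -- sum bounds
  have hsum_ge : ∀ i, (q i).natDegree ≤ ∑ j, t i j := by
    intro i
    rw [← htii i]
    exact Finset.single_le_sum (fun j _ => Nat.zero_le _) (Finset.mem_univ i)
  have htotal_ge : n ≤ ∑ i, ∑ j, t i j := by
    rw [hn]
    exact Finset.sum_le_sum fun i _ => hsum_ge i
  have hP_sum : (∀ i j, i ≠ j → IsCoprime (q i) (q j)) → ∑ i, ∑ j, t i j = n := by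
    intro hP
    rw [hn]
    refine Finset.sum_congr rfl fun i _ => ?_
    rw [← htii i]
    exact Finset.sum_eq_single i (fun j _ hj => hcop0 i j (hP i j (Ne.symm hj)))
      (by simp)
  have hnP_sum : (¬ ∀ i j, i ≠ j → IsCoprime (q i) (q j)) → n < ∑ i, ∑ j, t i j := by
    intro hnP
    push_neg at hnP
    obtain ⟨i0, j0, hne, hnc⟩ := hnP
    rw [hn]
    refine Finset.sum_lt_sum (fun i _ => hsum_ge i) ⟨i0, Finset.mem_univ i0, ?_⟩
    calc (q i0).natDegree < t i0 i0 + t i0 j0 := by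
          rw [htii i0]
          have := hncop i0 j0 hnc
          omega
      _ = ∑ j ∈ ({i0, j0} : Finset ι), t i0 j := (Finset.sum_pair hne).symm
      _ ≤ ∑ j, t i0 j := Finset.sum_le_sum_of_subset (Finset.subset_univ _)
  -- minimal polynomial degree bound
  have hμ_le : (minpoly ℂ A).natDegree ≤ n := by
    have := Polynomial.natDegree_le_of_dvd (Matrix.minpoly_dvd_charpoly A)
      (Matrix.charpoly_monic A).ne_zero
    rwa [Matrix.charpoly_natDegree_eq_dim, Fintype.card_fin] at this
  -- degree of minpoly is n iff pairwise coprimality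
  have hμdeg_iff : (minpoly ℂ A).natDegree = n ↔
      (∀ i j, i ≠ j → IsCoprime (q i) (q j)) := by
    constructor
    · intro hdeg
      by_contra hnP
      push_neg at hnP
      obtain ⟨i0, j0, hne, hnc⟩ := hnP
      set d := EuclideanDomain.gcd (q i0) (q j0) with hd
      have hdu : ¬ IsUnit d := fun h => hnc (EuclideanDomain.gcd_isUnit_iff.1 h)
      have hd0 : d ≠ 0 := by
        intro h0
        exact hq0 i0 (EuclideanDomain.gcd_eq_zero_iff.1 h0).1
      obtain ⟨b', hb'⟩ : d ∣ q j0 := EuclideanDomain.gcd_dvd_right _ _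
      have hb'0 : b' ≠ 0 := fun h => hq0 j0 (by rw [hb', h, mul_zero])
      set c : ℂ[X] := (∏ k ∈ Finset.univ.erase j0, q k) * b' with hc
      have hprod0 : (∏ k ∈ Finset.univ.erase j0, q k) ≠ 0 :=
        Finset.prod_ne_zero_iff.2 fun k _ => hq0 k
      have hc0 : c ≠ 0 := mul_ne_zero hprod0 hb'0
      have hdvd : ∀ k, q k ∣ c := by
        intro k
        by_cases hk : k = j0
        · subst hk
          obtain ⟨m, hm⟩ : d ∣ ∏ kk ∈ Finset.univ.erase k, q kk :=
            dvd_trans (EuclideanDomain.gcd_dvd_left _ _)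
              (Finset.dvd_prod_of_mem q (by simp [Finset.mem_erase, hne]))
          exact ⟨m, by rw [hc, hm, hb']; ring⟩
        · exact Dvd.dvd.mul_right
            (Finset.dvd_prod_of_mem q (by simp [Finset.mem_erase, hk])) b'
      have hμc : minpoly ℂ A ∣ c := (hkills2 c).2 hdvd
      have hlec : (minpoly ℂ A).natDegree ≤ c.natDegree :=
        Polynomial.natDegree_le_of_dvd hμc hc0
      have hdpos : 1 ≤ d.natDegree := by
        rcases Nat.eq_zero_or_pos d.natDegree with h0 | h1
        · exfalso
          apply hdu
          have hdc : d = Polynomial.C (d.coeff 0) := Polynomial.eq_C_of_natDegree_eq_zero h0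
          rw [hdc]
          refine Polynomial.isUnit_C.2 (isUnit_iff_ne_zero.2 fun hh => hd0 ?_)
          rw [hdc, hh, map_zero]
        · exact h1
      have hcount : c.natDegree + d.natDegree = n := by
        rw [hc, Polynomial.natDegree_mul hprod0 hb'0,
          Polynomial.natDegree_prod _ _ fun k _ => hq0 k, hn,
          ← Finset.add_sum_erase _ _ (Finset.mem_univ j0)]
        have hbd : d.natDegree + b'.natDegree = (q j0).natDegree := by
          rw [hb', Polynomial.natDegree_mul hd0 hb'0]
        omega
      omega
    · intro hP
      have hdvdμ : (∏ i, q i) ∣ minpoly ℂ A :=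
        Finset.prod_dvd_of_coprime
          (fun i _ j _ hij => hP i j hij)
          (fun i _ => (hkills2 _).1 dvd_rfl i)
      have hge := Polynomial.natDegree_le_of_dvd hdvdμ hμ0
      rw [Polynomial.natDegree_prod _ _ fun k _ => hq0 k, ← hn] at hge
      omega
  -- condition (1) is equivalent to the degree condition
  have h1_iff : (A.charpoly = minpoly ℂ A) ↔ (minpoly ℂ A).natDegree = n := by
    constructor
    · intro h
      rw [← h, Matrix.charpoly_natDegree_eq_dim, Fintype.card_fin]
    · intro h
      obtain ⟨c, hc⟩ := Matrix.minpoly_dvd_charpoly A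
      have hc0 : c ≠ 0 := by
        intro h0
        exact (Matrix.charpoly_monic A).ne_zero (by rw [hc, h0, mul_zero])
      have hdeg : c.natDegree = 0 := by
        have hnd := congrArg Polynomial.natDegree hc
        rw [Polynomial.natDegree_mul hμ0 hc0, Matrix.charpoly_natDegree_eq_dim,
          Fintype.card_fin, h] at hnd
        omega
      have hcC : c = Polynomial.C (c.coeff 0) := Polynomial.eq_C_of_natDegree_eq_zero hdeg
      have hml : c.leadingCoeff = 1 := by
        have hm := Matrix.charpoly_monic A
        rw [hc] at hm
        have hl := hm.leadingCoeff
        rwa [Polynomial.leadingCoeff_mul, hμmonic.leadingCoeff, one_mul] at hl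
      rw [hcC, Polynomial.leadingCoeff_C] at hml
      rw [hc, hcC, hml, _root_.map_one, mul_one]
  -- the kernel of evaluation is generated by the minimal polynomial
  have hker : RingHom.ker (Polynomial.aeval A : ℂ[X] →ₐ[ℂ] Matrix (Fin n) (Fin n) ℂ)
      = Submodule.span ℂ[X] {minpoly ℂ A} := by
    ext pp
    rw [RingHom.mem_ker,
      show Submodule.span ℂ[X] {minpoly ℂ A} = Ideal.span {minpoly ℂ A} from rfl,
      Ideal.mem_span_singleton]
    constructor
    · exact fun h => minpoly.dvd ℂ A h
    · rintro ⟨c, rfl⟩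
      rw [_root_.map_mul, minpoly.aeval, zero_mul]
  -- the dimension of the adjoined algebra
  have hadj : Module.finrank ℂ
      (Algebra.adjoin ℂ {A} : Subalgebra ℂ (Matrix (Fin n) (Fin n) ℂ))
      = (minpoly ℂ A).natDegree := by
    have hrange : (Algebra.adjoin ℂ {A} : Subalgebra ℂ (Matrix (Fin n) (Fin n) ℂ))
        = (Polynomial.aeval A : ℂ[X] →ₐ[ℂ] _).range :=
      Algebra.adjoin_singleton_eq_range_aeval ℂ A
    have h4 : Module.finrank ℂ
        (ℂ[X] ⧸ RingHom.ker (Polynomial.aeval A : ℂ[X] →ₐ[ℂ] Matrix (Fin n) (Fin n) ℂ))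
        = Module.finrank ℂ
          ((Polynomial.aeval A : ℂ[X] →ₐ[ℂ] Matrix (Fin n) (Fin n) ℂ).range) :=
      LinearEquiv.finrank_eq (Ideal.quotientKerEquivRange
        (Polynomial.aeval A : ℂ[X] →ₐ[ℂ] Matrix (Fin n) (Fin n) ℂ)).toLinearEquiv
    rw [hrange, ← h4, hker]
    exact finrank_quot _ hμ0
  -- the adjoined algebra is contained in the centralizer
  have hlecent : (Algebra.adjoin ℂ {A} : Subalgebra ℂ (Matrix (Fin n) (Fin n) ℂ))
      ≤ Subalgebra.centralizer ℂ {A} := by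
    rw [Algebra.adjoin_le_iff]
    intro x hx
    rw [Set.mem_singleton_iff] at hx
    subst hx
    rw [SetLike.mem_coe, Subalgebra.mem_centralizer_iff]
    intro g hg
    rw [Set.mem_singleton_iff] at hg
    subst hg
    rfl
  tfae_have 1 ↔ 2 := by
    rw [h1_iff, hμdeg_iff, hcent]
    constructor
    · exact hP_sum
    · intro hsum
      by_contra hnP
      exact absurd hsum (Nat.ne_of_gt (hnP_sum hnP))
  tfae_have 1 → 3 := by
    intro h1
    have hdeg := h1_iff.1 h1
    have hP := hμdeg_iff.1 hdeg
    have hle' : Subalgebra.toSubmodule (Algebra.adjoin ℂ {A} :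
          Subalgebra ℂ (Matrix (Fin n) (Fin n) ℂ))
        ≤ Subalgebra.toSubmodule (Subalgebra.centralizer ℂ {A} :
          Subalgebra ℂ (Matrix (Fin n) (Fin n) ℂ)) := fun x hx => hlecent hx
    have hfr : Module.finrank ℂ (Subalgebra.toSubmodule (Algebra.adjoin ℂ {A} :
          Subalgebra ℂ (Matrix (Fin n) (Fin n) ℂ)))
        = Module.finrank ℂ (Subalgebra.toSubmodule (Subalgebra.centralizer ℂ {A} :
          Subalgebra ℂ (Matrix (Fin n) (Fin n) ℂ))) := by
      show Module.finrank ℂ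
          (Algebra.adjoin ℂ {A} : Subalgebra ℂ (Matrix (Fin n) (Fin n) ℂ))
        = Module.finrank ℂ
          (Subalgebra.centralizer ℂ {A} : Subalgebra ℂ (Matrix (Fin n) (Fin n) ℂ))
      rw [hadj, hcent, hdeg, hP_sum hP]
    exact (Subalgebra.toSubmodule_injective
      (Submodule.eq_of_le_of_finrank_eq hle' hfr)).symm
  tfae_have 3 → 1 := by
    intro h3
    rw [h1_iff]
    have h4 : Module.finrank ℂ
        (Subalgebra.centralizer ℂ {A} : Subalgebra ℂ (Matrix (Fin n) (Fin n) ℂ))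
        = (minpoly ℂ A).natDegree := by
      rw [h3, hadj]
    rw [hcent] at h4
    omega
  tfae_finish
end

section
/- There is no holomorphic (indeed, no continuous) matrix-valued function S on a neighborhood of 0 in ℂ with S(0) invertible such that S(z)J(z) = A(z)S(z), where A(z) = [[z,1,0],[0,z²,z],[0,0,z²]] and J(z) = [[z,0,0],[0,z²,1],[0,0,z²]]. -/
open Matrix

open Topology Filter

/-- `A(z) = [[z,1,0],[0,z²,z],[0,0,z²]]`. -/
noncomputable def Amat (z : ℂ) : Matrix (Fin 3) (Fin 3) ℂ :=
  !![z, 1, 0; 0, z ^ 2, z; 0, 0, z ^ 2]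

/-- `J(z) = [[z,0,0],[0,z²,1],[0,0,z²]]`. -/
noncomputable def Jmat (z : ℂ) : Matrix (Fin 3) (Fin 3) ℂ :=
  !![z, 0, 0; 0, z ^ 2, 1; 0, 0, z ^ 2]

/-- There is no continuous (in particular, no holomorphic) matrix-valued function `S`
on a neighborhood of `0 ∈ ℂ` with `S(0)` invertible satisfying `S(z)J(z) = A(z)S(z)`:
any such `S` must have `det S(0) = 0`. -/
theorem no_holomorphic_similarity_to_jordan_form
    (U : Set ℂ) (hU : U ∈ nhds (0 : ℂ)) (S : ℂ → Matrix (Fin 3) (Fin 3) ℂ)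
    (hcont : ContinuousOn S U) (hsim : ∀ z ∈ U, S z * Jmat z = Amat z * S z) :
    ¬ IsUnit (S 0) := by
  have h0U : (0 : ℂ) ∈ U := mem_of_mem_nhds hU
  have key : ∀ z ∈ U, z ≠ 0 → S z 2 0 = 0 ∧ S z 2 1 = 0 := by
    intro z hz hz0
    have h := hsim z hz
    have h00 := congrFun (congrFun h 0) 0
    have h10 := congrFun (congrFun h 1) 0
    have h11 := congrFun (congrFun h 1) 1
    simp [Amat, Jmat, Matrix.mul_apply, Fin.sum_univ_three, Matrix.vecHead,
      Matrix.vecTail] at h00 h10 h11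
    have e10 : S z 1 0 = 0 := by linear_combination -h00
    constructor
    · have hz2 : z * S z 2 0 = 0 := by linear_combination -h10 + z * e10 - z ^ 2 * e10
      exact (mul_eq_zero.mp hz2).resolve_left hz0
    · have hz2 : z * S z 2 1 = 0 := by linear_combination -h11
      exact (mul_eq_zero.mp hz2).resolve_left hz0
  have h := hsim 0 h0U
  have h00 := congrFun (congrFun h 0) 0
  have h01 := congrFun (congrFun h 0) 1
  simp [Amat, Jmat, Matrix.mul_apply, Fin.sum_univ_three, Matrix.vecHead,
    Matrix.vecTail] at h00 h01
  have e10 : S 0 1 0 = 0 := by linear_combination -h00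
  have e11 : S 0 1 1 = 0 := by linear_combination -h01
  -- the remaining two entries at 0 via continuity
  have hVeq : 𝓝[U \ {(0 : ℂ)}] 0 = 𝓝[{(0 : ℂ)}ᶜ] 0 := by
    rw [Set.diff_eq, Set.inter_comm]
    exact (nhdsWithin_restrict' _ hU).symm
  have hne : (𝓝[U \ {(0 : ℂ)}] 0).NeBot := by
    rw [hVeq]; infer_instance
  have lim0 : ∀ j : Fin 3, (∀ z ∈ U, z ≠ 0 → S z 2 j = 0) → S 0 2 j = 0 := by
    intro j hj
    have cont : Continuous (fun M : Matrix (Fin 3) (Fin 3) ℂ => M 2 j) := by fun_prop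
    have t1 : Tendsto (fun z => S z 2 j) (𝓝[U \ {(0 : ℂ)}] 0) (𝓝 (S 0 2 j)) :=
      (cont.tendsto _).comp ((hcont.continuousWithinAt h0U).mono Set.diff_subset)
    have t2 : Tendsto (fun z => S z 2 j) (𝓝[U \ {(0 : ℂ)}] 0) (𝓝 0) := by
      refine Tendsto.congr' ?_ tendsto_const_nhds
      filter_upwards [self_mem_nhdsWithin] with z hz
      exact (hj z hz.1 hz.2).symm
    exact tendsto_nhds_unique t1 t2
  have e20 : S 0 2 0 = 0 := lim0 0 fun z hz hz0 => (key z hz hz0).1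
  have e21 : S 0 2 1 = 0 := lim0 1 fun z hz hz0 => (key z hz hz0).2
  intro hu
  have hdet : (S 0).det = 0 := by
    rw [Matrix.det_fin_three, e10, e11, e20, e21]; ring
  have := (Matrix.isUnit_iff_isUnit_det _).mp hu
  rw [hdet] at this
  exact (not_isUnit_zero this).elim
end

section
/- Let Δ_0 : U → M(n,ℂ) be a holomorphic diagonal matrix function with pairwise distinct eigenvalue functions f_1,...,f_n (f_i(x) ≠ f_j(x) for all x ∈ U, i ≠ j), let 𝔅 : U → M(n,ℂ) and let ϖ be a holomorphic matrix-valued 1-form on U satisfying the integrability relation [dΔ_0, 𝔅] + [Δ_0, ϖ] = 0. Then there exists a holomorphic off-diagonal matrix function ℒ : U → M(n,ℂ) such that 𝔅'' = [ℒ, Δ_0] and ϖ'' = [dΔ_0, ℒ]; explicitly ℒ_{ij} = 𝔅_{ij}/(f_j − f_i) for i ≠ j. -/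
/-- Division lemma for the integrability relation `[dΔ₀,𝔅] + [Δ₀,ϖ] = 0`:
if `Δ₀ = diag(f₁,...,f_n)` has pairwise distinct holomorphic eigenvalue functions
on `U`, `𝔅` is holomorphic on `U`, and the entrywise relation
`(df_i − df_j) 𝔅_{ij} + (f_i − f_j) ϖ_{ij} = 0` holds on `U`, then there is a
holomorphic off-diagonal matrix `ℒ` on `U` with `𝔅'' = [ℒ,Δ₀]` and `ϖ'' = [dΔ₀,ℒ]`,
given explicitly by `ℒ_{ij} = 𝔅_{ij}/(f_j − f_i)` for `i ≠ j`. -/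
theorem exists_offdiag_gauge_matrix
    {E : Type*} [NormedAddCommGroup E] [NormedSpace ℂ E]
    (n : ℕ) (U : Set E) (hU : IsOpen U)
    (f : Fin n → E → ℂ) (B : E → Matrix (Fin n) (Fin n) ℂ)
    (ϖ : E → Fin n → Fin n → (E →L[ℂ] ℂ))
    (hf : ∀ i, DifferentiableOn ℂ (f i) U)
    (hB : ∀ i j, DifferentiableOn ℂ (fun x => B x i j) U)
    (hdist : ∀ x ∈ U, ∀ i j : Fin n, i ≠ j → f i x ≠ f j x)
    (hint : ∀ x ∈ U, ∀ i j : Fin n,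
      B x i j • (fderiv ℂ (f i) x - fderiv ℂ (f j) x) + (f i x - f j x) • ϖ x i j = 0) :
    ∃ L : E → Matrix (Fin n) (Fin n) ℂ,
      (∀ i j, DifferentiableOn ℂ (fun x => L x i j) U) ∧
      (∀ x ∈ U, ∀ i, L x i i = 0) ∧
      (∀ x ∈ U, ∀ i j : Fin n, i ≠ j → L x i j = B x i j / (f j x - f i x)) ∧
      (∀ x ∈ U, ∀ i j : Fin n, i ≠ j → B x i j = L x i j * (f j x - f i x)) ∧
      (∀ x ∈ U, ∀ i j : Fin n, i ≠ j →
        ϖ x i j = L x i j • (fderiv ℂ (f i) x - fderiv ℂ (f j) x)) := by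
  refine ⟨fun x => Matrix.of fun i j => if i = j then 0 else B x i j / (f j x - f i x),
    ?_, ?_, ?_, ?_, ?_⟩
  · intro i j
    by_cases h : i = j
    · simp only [Matrix.of_apply, if_pos h]
      exact differentiableOn_const 0
    · simp only [Matrix.of_apply, if_neg h]
      simp only [div_eq_mul_inv]
      exact (hB i j).mul (((hf j).sub (hf i)).inv
        (fun x hx => sub_ne_zero_of_ne (hdist x hx j i (Ne.symm h))))
  · intro x _ i; simp
  · intro x _ i j h; simp [h]
  · intro x hx i j h
    simp only [Matrix.of_apply]
    rw [if_neg h, div_mul_cancel₀]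
    exact sub_ne_zero_of_ne (hdist x hx j i (Ne.symm h))
  · intro x hx i j h
    have hne : f i x - f j x ≠ 0 := sub_ne_zero_of_ne (hdist x hx i j h)
    have h1 := hint x hx i j
    have : (f i x - f j x) • ϖ x i j = -(B x i j) • (fderiv ℂ (f i) x - fderiv ℂ (f j) x) := by
      linear_combination (norm := module) h1
    have h2 : ϖ x i j = ((f i x - f j x)⁻¹ * -(B x i j)) • (fderiv ℂ (f i) x - fderiv ℂ (f j) x) := by
      rw [mul_smul, ← this, smul_smul, inv_mul_cancel₀ hne, one_smul]
    rw [h2]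
    congr 1
    simp only [Matrix.of_apply]
    rw [if_neg h]
    rw [div_eq_mul_inv, ← neg_sub (f j x) (f i x), inv_neg]
    ring
end

section
/- Let Δ_0 = diag(f_1,...,f_n) and 𝔅'_o = diag(b_1,...,b_n) with 𝔅 = 𝔅'_o + [L,Δ_0] for an off-diagonal matrix L, and suppose a formal series F(z) = Id + ∑_{k≥1} F_k z^{-k} satisfies the recursion [Δ_0, F_{k+1}] + [𝔅'_o, F_k] + [L,Δ_0]F_k + kF_k = 0 for all k ≥ 0 with F_0 = Id, at a fixed point x. If f_i(x) ≠ f_j(x) for all i ≠ j and one imposes the diagonal normalization (F_{k+1})_{ii} = −(1/(k+1)) ∑_{ℓ≠i} 𝔅_{iℓ}(F_{k+1})_{ℓi}, then the matrices F_k are uniquely determined by the data (Δ_0(x), 𝔅'_o, L(x)). -/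
open Matrix

/-- Unique solvability of the formal gauge recursion at a non-coalescence point:
with `Δ₀ = diag(f)`, `𝔅'ₒ = diag(b)`, `𝔅 = 𝔅'ₒ + [L,Δ₀]` (`L` off-diagonal) and
`f i ≠ f j` for `i ≠ j`, any two sequences `F, G` with `F 0 = G 0 = 1` satisfying the
recursion `[Δ₀,F_{k+1}] + [𝔅'ₒ,F_k] + [L,Δ₀]F_k + k F_k = 0` together with the
diagonal normalization `(F_{k+1})_{ii} = −(k+1)⁻¹ ∑_{ℓ≠i} 𝔅_{iℓ}(F_{k+1})_{ℓi}`
coincide: the `F_k` are uniquely determined by `(Δ₀, 𝔅'ₒ, L)`. -/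
theorem formal_gauge_recursion_unique
    (n : ℕ) (f b : Fin n → ℂ) (L : Matrix (Fin n) (Fin n) ℂ)
    (hL : ∀ i, L i i = 0) (hf : ∀ i j : Fin n, i ≠ j → f i ≠ f j)
    (F G : ℕ → Matrix (Fin n) (Fin n) ℂ)
    (hF0 : F 0 = 1) (hG0 : G 0 = 1)
    (Δ₀ : Matrix (Fin n) (Fin n) ℂ) (hΔ₀ : Δ₀ = Matrix.diagonal f)
    (B : Matrix (Fin n) (Fin n) ℂ) (hB : B = Matrix.diagonal b + (L * Δ₀ - Δ₀ * L))
    (hFrec : ∀ k : ℕ,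
      (Δ₀ * F (k + 1) - F (k + 1) * Δ₀) +
        (Matrix.diagonal b * F k - F k * Matrix.diagonal b) +
        (L * Δ₀ - Δ₀ * L) * F k + (k : ℂ) • F k = 0)
    (hGrec : ∀ k : ℕ,
      (Δ₀ * G (k + 1) - G (k + 1) * Δ₀) +
        (Matrix.diagonal b * G k - G k * Matrix.diagonal b) +
        (L * Δ₀ - Δ₀ * L) * G k + (k : ℂ) • G k = 0)
    (hFdiag : ∀ k : ℕ, ∀ i : Fin n,
      F (k + 1) i i = -(1 / ((k : ℂ) + 1)) * ∑ ℓ ∈ Finset.univ.erase i, B i ℓ * F (k + 1) ℓ i)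
    (hGdiag : ∀ k : ℕ, ∀ i : Fin n,
      G (k + 1) i i = -(1 / ((k : ℂ) + 1)) * ∑ ℓ ∈ Finset.univ.erase i, B i ℓ * G (k + 1) ℓ i) :
    ∀ k, F k = G k := by
  intro k
  induction k with
  | zero => rw [hF0, hG0]
  | succ k ih =>
    have key : ∀ i j : Fin n, i ≠ j → F (k + 1) i j = G (k + 1) i j := by
      intro i j hij
      have eF := congrFun (congrFun (hFrec k) i) j
      have eG := congrFun (congrFun (hGrec k) i) j
      rw [← ih] at eG
      simp only [hΔ₀, Matrix.add_apply, Matrix.sub_apply, Matrix.smul_apply,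
        Matrix.zero_apply, Matrix.diagonal_mul, Matrix.mul_diagonal,
        smul_eq_mul] at eF eG
      have h2 : (f i - f j) * (F (k + 1) i j - G (k + 1) i j) = 0 := by
        linear_combination eF - eG
      rcases mul_eq_zero.mp h2 with h | h
      · exact absurd (sub_eq_zero.mp h) (hf i j hij)
      · exact sub_eq_zero.mp h
    ext i j
    by_cases hij : i = j
    · subst hij
      rw [hFdiag k i, hGdiag k i]
      congr 1
      refine Finset.sum_congr rfl fun ℓ hℓ => ?_
      rw [key ℓ i (Finset.ne_of_mem_erase hℓ)]
    · exact key i j hij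
end
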